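/- arXiv:2206.08515 — 3 statements merged into one kernel-verified Lean document; each statement's English description precedes it below -/
import Mathlib

section
/- In ℝ³, let u be a nonzero vector and let T denote the orthogonal projection onto the orthogonal complement of span{u}, i.e., T x = x − (⟪u, x⟫ / ‖u‖²) • u. Let v be a vector with T v ≠ 0. If p and q are vectors satisfying ⟪u, p − q⟫ = 0, ⟪T v, p − q⟫ = 0, and ⟪(T v) ×₃ (p − q), u⟫ = 0, then p = q. -/
open scoped RealInnerProductSpace Matrix

/-- The cross product `a ×₃ b` of two vectors in ℝ³, regarded as an element of
`EuclideanSpace ℝ (Fin 3)` (it is definitionally `crossProduct a b`). -/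
noncomputable def cross3 (a b : EuclideanSpace ℝ (Fin 3)) : EuclideanSpace ℝ (Fin 3) :=
  WithLp.toLp 2 (WithLp.ofLp a ⨯₃ WithLp.ofLp b)

/-- Reduced system of equations in the proof of Lemma 1 of ComENet: if `u ≠ 0`,
`T` is the orthogonal projection onto the orthogonal complement of `span {u}`,
`T v ≠ 0`, and `p - q` is orthogonal to `u` and to `T v` while `(T v) ×₃ (p - q)` is
orthogonal to `u`, then `p = q`. -/
theorem eq_of_reduced_system
    (u v p q : EuclideanSpace ℝ (Fin 3)) (hu : u ≠ 0)
    (T : EuclideanSpace ℝ (Fin 3) → EuclideanSpace ℝ (Fin 3))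
    (hT : ∀ x, T x = x - (⟪u, x⟫ / ‖u‖ ^ 2) • u)
    (hv : T v ≠ 0)
    (h1 : ⟪u, p - q⟫ = 0)
    (h2 : ⟪T v, p - q⟫ = 0)
    (h3 : ⟪cross3 (T v) (p - q), u⟫ = 0) :
    p = q := by
  set a : EuclideanSpace ℝ (Fin 3) := T v with ha
  set w : EuclideanSpace ℝ (Fin 3) := p - q with hw
  have hU : ‖u‖ ^ 2 ≠ 0 := pow_ne_zero _ (norm_ne_zero_iff.mpr hu)
  have e0 : ⟪u, a⟫ = 0 := by
    rw [ha, hT v, inner_sub_right, inner_smul_right, real_inner_self_eq_norm_sq]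
    field_simp
    ring
  -- coordinate versions
  have E0 : a 0 * u 0 + a 1 * u 1 + a 2 * u 2 = 0 := by
    rw [show (0:ℝ) = ⟪u, a⟫ from e0.symm]
    simp [PiLp.inner_apply, Fin.sum_univ_three, RCLike.inner_apply]
  have E1 : u 0 * w 0 + u 1 * w 1 + u 2 * w 2 = 0 := by
    rw [show (0:ℝ) = ⟪u, w⟫ from h1.symm]
    simp [PiLp.inner_apply, Fin.sum_univ_three, RCLike.inner_apply]
    ring
  have E2 : a 0 * w 0 + a 1 * w 1 + a 2 * w 2 = 0 := by
    rw [show (0:ℝ) = ⟪a, w⟫ from h2.symm]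
    simp [PiLp.inner_apply, Fin.sum_univ_three, RCLike.inner_apply]
    ring
  have E3 : (a 1 * w 2 - a 2 * w 1) * u 0 + (a 2 * w 0 - a 0 * w 2) * u 1
      + (a 0 * w 1 - a 1 * w 0) * u 2 = 0 := by
    rw [show (0:ℝ) = ⟪cross3 a w, u⟫ from h3.symm]
    simp [cross3, crossProduct, PiLp.inner_apply, Fin.sum_univ_three, RCLike.inner_apply]
    ring
  -- nonvanishing of the squared norms
  have hA' : a 0 ^ 2 + a 1 ^ 2 + a 2 ^ 2 ≠ 0 := by
    have h : ⟪a, a⟫ ≠ 0 := inner_self_ne_zero.mpr hv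
    intro hc; apply h
    have hx : ⟪a, a⟫ = a 0 ^ 2 + a 1 ^ 2 + a 2 ^ 2 := by
      simp [PiLp.inner_apply, Fin.sum_univ_three, RCLike.inner_apply]
      rw [EuclideanSpace.norm_sq_eq]
      simp [Fin.sum_univ_three]
    rw [hx, hc]
  have hU' : u 0 ^ 2 + u 1 ^ 2 + u 2 ^ 2 ≠ 0 := by
    have h : ⟪u, u⟫ ≠ 0 := inner_self_ne_zero.mpr hu
    intro hc; apply h
    have hx : ⟪u, u⟫ = u 0 ^ 2 + u 1 ^ 2 + u 2 ^ 2 := by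
      simp [PiLp.inner_apply, Fin.sum_univ_three, RCLike.inner_apply]
      rw [EuclideanSpace.norm_sq_eq]
      simp [Fin.sum_univ_three]
    rw [hx, hc]
  have hAU : (a 0 ^ 2 + a 1 ^ 2 + a 2 ^ 2) * (u 0 ^ 2 + u 1 ^ 2 + u 2 ^ 2) ≠ 0 :=
    mul_ne_zero hA' hU'
  have k0 : (a 0 ^ 2 + a 1 ^ 2 + a 2 ^ 2) * (u 0 ^ 2 + u 1 ^ 2 + u 2 ^ 2) * w 0 = 0 := by
    linear_combination ((a 0 ^ 2 + a 1 ^ 2 + a 2 ^ 2) * u 0) * E1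
      + ((u 0 ^ 2 + u 1 ^ 2 + u 2 ^ 2) * a 0) * E2
      + (a 2 * u 1 - a 1 * u 2) * E3
      + (w 0 * (a 0 * u 0 + a 1 * u 1 + a 2 * u 2)
        - u 0 * (a 0 * w 0 + a 1 * w 1 + a 2 * w 2)
        - a 0 * (u 0 * w 0 + u 1 * w 1 + u 2 * w 2)) * E0
  have k1 : (a 0 ^ 2 + a 1 ^ 2 + a 2 ^ 2) * (u 0 ^ 2 + u 1 ^ 2 + u 2 ^ 2) * w 1 = 0 := by
    linear_combination ((a 0 ^ 2 + a 1 ^ 2 + a 2 ^ 2) * u 1) * E1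
      + ((u 0 ^ 2 + u 1 ^ 2 + u 2 ^ 2) * a 1) * E2
      + (a 0 * u 2 - a 2 * u 0) * E3
      + (w 1 * (a 0 * u 0 + a 1 * u 1 + a 2 * u 2)
        - u 1 * (a 0 * w 0 + a 1 * w 1 + a 2 * w 2)
        - a 1 * (u 0 * w 0 + u 1 * w 1 + u 2 * w 2)) * E0
  have k2 : (a 0 ^ 2 + a 1 ^ 2 + a 2 ^ 2) * (u 0 ^ 2 + u 1 ^ 2 + u 2 ^ 2) * w 2 = 0 := by
    linear_combination ((a 0 ^ 2 + a 1 ^ 2 + a 2 ^ 2) * u 2) * E1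
      + ((u 0 ^ 2 + u 1 ^ 2 + u 2 ^ 2) * a 2) * E2
      + (a 1 * u 0 - a 0 * u 1) * E3
      + (w 2 * (a 0 * u 0 + a 1 * u 1 + a 2 * u 2)
        - u 2 * (a 0 * w 0 + a 1 * w 1 + a 2 * w 2)
        - a 2 * (u 0 * w 0 + u 1 * w 1 + u 2 * w 2)) * E0
  have hw0 : w 0 = 0 := by
    rcases mul_eq_zero.mp k0 with h | h
    · exact absurd h hAU
    · exact h
  have hw1 : w 1 = 0 := by
    rcases mul_eq_zero.mp k1 with h | h
    · exact absurd h hAU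
    · exact h
  have hw2 : w 2 = 0 := by
    rcases mul_eq_zero.mp k2 with h | h
    · exact absurd h hAU
    · exact h
  have : w = 0 := by
    ext i
    fin_cases i
    · exact hw0
    · exact hw1
    · exact hw2
  exact sub_eq_zero.mp (hw ▸ this)
end

section
/- In ℝ³, let u be a nonzero vector and let T denote the orthogonal projection onto the orthogonal complement of span{u}, i.e., T x = x − (⟪u, x⟫ / ‖u‖²) • u. Let v be a vector with T v ≠ 0, and let d, θ, φ be real numbers. Suppose p and q both satisfy the system: ‖x‖ = d; ⟪u, x⟫ = ‖u‖ · d · cos θ; ⟪T v, T x⟫ = ‖T v‖ · ‖T x‖ · cos φ; and ⟪(T v) ×₃ (T x), u⟫ = ‖u‖ · ‖T v‖ · ‖T x‖ · sin φ. Then p = q. -/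
open scoped RealInnerProductSpace Matrix

/-- If `w` is orthogonal to two nonzero orthogonal vectors `a, u` in ℝ³ and the triple
product `⟪a ×₃ w, u⟫` vanishes, then `w = 0`. -/
lemma vec_eq_zero_of_orth (a w u : EuclideanSpace ℝ (Fin 3)) (ha : a ≠ 0) (hu : u ≠ 0)
    (h1 : ⟪a, w⟫ = 0) (h2 : ⟪a, u⟫ = 0) (h3 : ⟪w, u⟫ = 0)
    (h4 : ⟪cross3 a w, u⟫ = 0) : w = 0 := by
  simp only [PiLp.inner_apply, RCLike.inner_apply, Fin.sum_univ_three, cross3, crossProduct, WithLp.ofLp_toLp,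
    starRingEnd_apply, star_trivial, LinearMap.mk₂_apply, Matrix.cons_val_zero,
    Matrix.cons_val_one, Matrix.head_cons, Matrix.cons_val_two, Matrix.tail_cons] at h1 h2 h3 h4
  have key0 : ∀ x : EuclideanSpace ℝ (Fin 3), x 0 ^ 2 + x 1 ^ 2 + x 2 ^ 2 = 0 → x = 0 := by
    intro x hx
    have : ⟪x, x⟫ = (0 : ℝ) := by
      simp only [PiLp.inner_apply, RCLike.inner_apply, Fin.sum_univ_three, starRingEnd_apply,
        star_trivial]
      nlinarith [sq_nonneg (x 0), sq_nonneg (x 1), sq_nonneg (x 2)]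
    exact inner_self_eq_zero.mp this
  have ha2 : a 0 ^ 2 + a 1 ^ 2 + a 2 ^ 2 ≠ 0 := fun h => ha (key0 a h)
  have hu2 : u 0 ^ 2 + u 1 ^ 2 + u 2 ^ 2 ≠ 0 := fun h => hu (key0 u h)
  have hprod : (a 0 ^ 2 + a 1 ^ 2 + a 2 ^ 2) * (w 0 ^ 2 + w 1 ^ 2 + w 2 ^ 2) *
      (u 0 ^ 2 + u 1 ^ 2 + u 2 ^ 2) = 0 := by
    linear_combination (((a 1 * w 2 - a 2 * w 1) * u 0 + (a 2 * w 0 - a 0 * w 2) * u 1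
        + (a 0 * w 1 - a 1 * w 0) * u 2)) * h4
      + ((a 0 * u 0 + a 1 * u 1 + a 2 * u 2) * (w 0 ^ 2 + w 1 ^ 2 + w 2 ^ 2)) * h2
      + ((w 0 * u 0 + w 1 * u 1 + w 2 * u 2) * (a 0 ^ 2 + a 1 ^ 2 + a 2 ^ 2)
         - 2 * (a 0 * w 0 + a 1 * w 1 + a 2 * w 2) * (a 0 * u 0 + a 1 * u 1 + a 2 * u 2)) * h3
      + ((a 0 * w 0 + a 1 * w 1 + a 2 * w 2) * (u 0 ^ 2 + u 1 ^ 2 + u 2 ^ 2)) * h1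
  have hw : w 0 ^ 2 + w 1 ^ 2 + w 2 ^ 2 = 0 := by
    rcases mul_eq_zero.mp hprod with h | h
    · rcases mul_eq_zero.mp h with h | h
      · exact absurd h ha2
      · exact h
    · exact absurd h hu2
  exact key0 w hw

/-- Case (1) of Lemma 1 of ComENet: with `u ≠ 0` the z-axis direction, `T` the orthogonal
projection onto the orthogonal complement of `span {u}`, and `v` a reference vector with
`T v ≠ 0`, the spherical-coordinate tuple `(d, θ, φ)` uniquely determines the position:
any two vectors `p, q` satisfying the system coincide. -/
theorem unique_of_spherical_coords
    (u v : EuclideanSpace ℝ (Fin 3)) (hu : u ≠ 0)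
    (T : EuclideanSpace ℝ (Fin 3) → EuclideanSpace ℝ (Fin 3))
    (hT : ∀ x, T x = x - (⟪u, x⟫ / ‖u‖ ^ 2) • u)
    (hv : T v ≠ 0)
    (d θ φ : ℝ)
    (p q : EuclideanSpace ℝ (Fin 3))
    (hp1 : ‖p‖ = d)
    (hp2 : ⟪u, p⟫ = ‖u‖ * d * Real.cos θ)
    (hp3 : ⟪T v, T p⟫ = ‖T v‖ * ‖T p‖ * Real.cos φ)
    (hp4 : ⟪cross3 (T v) (T p), u⟫ = ‖u‖ * ‖T v‖ * ‖T p‖ * Real.sin φ)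
    (hq1 : ‖q‖ = d)
    (hq2 : ⟪u, q⟫ = ‖u‖ * d * Real.cos θ)
    (hq3 : ⟪T v, T q⟫ = ‖T v‖ * ‖T q‖ * Real.cos φ)
    (hq4 : ⟪cross3 (T v) (T q), u⟫ = ‖u‖ * ‖T v‖ * ‖T q‖ * Real.sin φ) :
    p = q := by
  have hnu : ‖u‖ ≠ 0 := norm_ne_zero_iff.mpr hu
  have horth : ∀ x, ⟪u, T x⟫ = 0 := by
    intro x
    rw [hT, inner_sub_right, real_inner_smul_right, real_inner_self_eq_norm_sq]
    field_simp
    ring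
  have huvpq : ⟪u, p⟫ = ⟪u, q⟫ := hp2.trans hq2.symm
  have hsub : p - q = T p - T q := by
    rw [hT, hT, huvpq]; abel
  have hTnorm : ∀ x, ‖T x‖ ^ 2 = ‖x‖ ^ 2 - ⟪u, x⟫ ^ 2 / ‖u‖ ^ 2 := by
    intro x
    rw [hT, norm_sub_sq_real, real_inner_smul_right, norm_smul, Real.norm_eq_abs, mul_pow,
      sq_abs, real_inner_comm x u]
    have h := sq_nonneg ‖u‖
    field_simp
    ring
  have hTpq2 : ‖T p‖ ^ 2 = ‖T q‖ ^ 2 := by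
    rw [hTnorm, hTnorm, hp1, hq1, hp2, hq2]
  have hTpq : ‖T p‖ = ‖T q‖ := by
    nlinarith [norm_nonneg (T p), norm_nonneg (T q)]
  have h1 : ⟪T v, T p - T q⟫ = 0 := by
    rw [inner_sub_right, hp3, hq3, hTpq]; ring
  have h2 : ⟪T v, u⟫ = 0 := by
    rw [real_inner_comm]; exact horth v
  have h3 : ⟪T p - T q, u⟫ = 0 := by
    rw [inner_sub_left, real_inner_comm u (T p), real_inner_comm u (T q), horth p, horth q,
      sub_zero]
  have h4 : ⟪cross3 (T v) (T p - T q), u⟫ = 0 := by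
    have hc : cross3 (T v) (T p - T q) = cross3 (T v) (T p) - cross3 (T v) (T q) := by
      simp [cross3, map_sub]
    rw [hc, inner_sub_left, hp4, hq4, hTpq]; ring
  have hw := vec_eq_zero_of_orth (T v) (T p - T q) u hv hu h1 h2 h3 h4
  have : p - q = 0 := by rw [hsub, hw]
  exact sub_eq_zero.mp this
end

section
/- In ℝ³, let u be a nonzero vector and let T denote the orthogonal projection onto the orthogonal complement of span{u}, i.e., T x = x − (⟪u, x⟫ / ‖u‖²) • u. Let r be a vector with T r ≠ 0, and let d, θ, τ be real numbers. Suppose p and q both satisfy the system: ‖x‖ = d; ⟪u, x⟫ = ‖u‖ · d · cos θ; ⟪T r, T x⟫ = ‖T r‖ · ‖T x‖ · cos τ; and ⟪(T r) ×₃ (T x), u⟫ = ‖u‖ · ‖T r‖ · ‖T x‖ · sin τ. Then p = q. -/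
open scoped RealInnerProductSpace Matrix

-- auxiliary lemmas

lemma inner_eq_dot (x y : EuclideanSpace ℝ (Fin 3)) :
    ⟪x, y⟫ = (x : Fin 3 → ℝ) ⬝ᵥ (y : Fin 3 → ℝ) := by
  simp [PiLp.inner_apply, dotProduct, RCLike.inner_apply, conj_trivial, mul_comm]

lemma bac_cab (a b c : Fin 3 → ℝ) :
    a ⨯₃ (b ⨯₃ c) = (a ⬝ᵥ c) • b - (a ⬝ᵥ b) • c := by
  funext i
  fin_cases i <;>
    simp [cross_apply, dotProduct, Fin.sum_univ_three] <;> ring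

lemma triple_cyclic (a b c : Fin 3 → ℝ) :
    (a ⨯₃ b) ⬝ᵥ c = (c ⨯₃ a) ⬝ᵥ b := by
  simp [cross_apply, dotProduct, Fin.sum_univ_three]; ring

lemma key (u w z : Fin 3 → ℝ) (hu : u ⬝ᵥ u ≠ 0) (hw : w ⬝ᵥ w ≠ 0)
    (huw : u ⬝ᵥ w = 0) (h1 : u ⬝ᵥ z = 0) (h2 : w ⬝ᵥ z = 0)
    (h3 : (w ⨯₃ z) ⬝ᵥ u = 0) : z = 0 := by
  set v := u ⨯₃ w with hv
  have hzv : v ⬝ᵥ z = 0 := by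
    have := triple_cyclic u w z
    have h3' := triple_cyclic w z u
    -- (w×z)⬝u = (u×w)⬝z
    rw [h3'] at h3
    exact h3
  have hvv : v ⬝ᵥ v = (u ⬝ᵥ u) * (w ⬝ᵥ w) := by
    rw [hv, cross_dot_cross, huw]; ring
  have hcz : z ⨯₃ v = 0 := by
    rw [hv, bac_cab]
    have hzw : z ⬝ᵥ w = 0 := by rwa [dotProduct_comm] at h2
    have hzu : z ⬝ᵥ u = 0 := by rwa [dotProduct_comm] at h1
    simp [hzw, hzu]
  have hlag : (z ⨯₃ v) ⬝ᵥ (z ⨯₃ v) = (z ⬝ᵥ z) * (v ⬝ᵥ v) - (z ⬝ᵥ v) * (v ⬝ᵥ z) := by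
    rw [cross_dot_cross]
  rw [hcz] at hlag
  have hzv' : z ⬝ᵥ v = 0 := by rwa [dotProduct_comm] at hzv
  have hprod : (z ⬝ᵥ z) * (v ⬝ᵥ v) = 0 := by
    have h0 : (0 : Fin 3 → ℝ) ⬝ᵥ (0 : Fin 3 → ℝ) = 0 := by simp
    rw [h0, hzv', hzv] at hlag
    linarith
  have hzz : z ⬝ᵥ z = 0 := by
    have hvne : v ⬝ᵥ v ≠ 0 := by rw [hvv]; exact mul_ne_zero hu hw
    exact (mul_eq_zero.mp hprod).resolve_right hvne
  exact dotProduct_self_eq_zero.mp hzz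

/-- Case (2) of Lemma 1 of ComENet: with `u ≠ 0` the bond direction, `T` the orthogonal
projection onto the orthogonal complement of `span {u}`, and `r` a reference vector
(taken from the neighbor's neighbor) with `T r ≠ 0`, the tuple `(d, θ, τ)` uniquely
determines the position: any two vectors `p, q` satisfying the system coincide. -/
theorem unique_of_rotation_coords
    (u r : EuclideanSpace ℝ (Fin 3)) (hu : u ≠ 0)
    (T : EuclideanSpace ℝ (Fin 3) → EuclideanSpace ℝ (Fin 3))
    (hT : ∀ x, T x = x - (⟪u, x⟫ / ‖u‖ ^ 2) • u)
    (hr : T r ≠ 0)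
    (d θ τ : ℝ)
    (p q : EuclideanSpace ℝ (Fin 3))
    (hp1 : ‖p‖ = d)
    (hp2 : ⟪u, p⟫ = ‖u‖ * d * Real.cos θ)
    (hp3 : ⟪T r, T p⟫ = ‖T r‖ * ‖T p‖ * Real.cos τ)
    (hp4 : ⟪cross3 (T r) (T p), u⟫ = ‖u‖ * ‖T r‖ * ‖T p‖ * Real.sin τ)
    (hq1 : ‖q‖ = d)
    (hq2 : ⟪u, q⟫ = ‖u‖ * d * Real.cos θ)
    (hq3 : ⟪T r, T q⟫ = ‖T r‖ * ‖T q‖ * Real.cos τ)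
    (hq4 : ⟪cross3 (T r) (T q), u⟫ = ‖u‖ * ‖T r‖ * ‖T q‖ * Real.sin τ) :
    p = q := by
  have hun : ‖u‖ ^ 2 ≠ 0 := pow_ne_zero 2 (norm_ne_zero_iff.mpr hu)
  have hTinner : ∀ x, ⟪u, T x⟫ = 0 := by
    intro x
    rw [hT x, inner_sub_right, real_inner_smul_right, real_inner_self_eq_norm_sq]
    field_simp
    ring
  have hTnormsq : ∀ x, ‖T x‖ ^ 2 = ‖x‖ ^ 2 - ⟪u, x⟫ ^ 2 / ‖u‖ ^ 2 := by
    intro x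
    have hx : ⟪T x, T x⟫ =
        ⟪x, x⟫ - 2 * (⟪u, x⟫ ^ 2 / ‖u‖ ^ 2) + (⟪u, x⟫ / ‖u‖ ^ 2) ^ 2 * ⟪u, u⟫ := by
      rw [hT x]
      simp only [inner_sub_left, inner_sub_right, real_inner_smul_left,
        real_inner_smul_right, real_inner_comm x u]
      field_simp
      ring
    rw [← real_inner_self_eq_norm_sq, ← real_inner_self_eq_norm_sq x, hx,
      real_inner_self_eq_norm_sq u]
    field_simp
    ring
  have hab : ‖T p‖ = ‖T q‖ := by
    have h1 : ‖T p‖ ^ 2 = ‖T q‖ ^ 2 := by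
      rw [hTnormsq, hTnormsq, hp1, hq1, hp2, hq2]
    exact (sq_eq_sq₀ (norm_nonneg _) (norm_nonneg _)).mp h1
  have hww : ⟪T r, T p⟫ = ⟪T r, T q⟫ := by rw [hp3, hq3, hab]
  have hcr : ⟪cross3 (T r) (T p), u⟫ = ⟪cross3 (T r) (T q), u⟫ := by
    rw [hp4, hq4, hab]
  -- pass to dot products
  set w : Fin 3 → ℝ := (T r).ofLp with hw
  set a : Fin 3 → ℝ := (T p).ofLp with ha
  set b : Fin 3 → ℝ := (T q).ofLp with hb
  have hTpq : T p = T q := by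
    have hz : a - b = 0 := by
      apply key u w (a - b)
      · rw [← inner_eq_dot, real_inner_self_eq_norm_sq]; exact hun
      · rw [← inner_eq_dot, real_inner_self_eq_norm_sq]
        exact pow_ne_zero 2 (norm_ne_zero_iff.mpr hr)
      · rw [← inner_eq_dot]; exact hTinner r
      · rw [dotProduct_sub, ← inner_eq_dot, ← inner_eq_dot,
          hTinner p, hTinner q, sub_zero]
      · rw [dotProduct_sub, ← inner_eq_dot, ← inner_eq_dot]
        rw [hww]; ring
      · rw [map_sub, sub_dotProduct]
        have e1 : (w ⨯₃ a) ⬝ᵥ u = ⟪cross3 (T r) (T p), u⟫ := (inner_eq_dot _ _).symm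
        have e2 : (w ⨯₃ b) ⬝ᵥ u = ⟪cross3 (T r) (T q), u⟫ := (inner_eq_dot _ _).symm
        rw [e1, e2, hcr, sub_self]
    have : a = b := sub_eq_zero.mp hz
    exact WithLp.ofLp_injective 2 this
  have hc : (⟪u, p⟫ / ‖u‖ ^ 2 : ℝ) = ⟪u, q⟫ / ‖u‖ ^ 2 := by rw [hp2, hq2]
  have h1 := hT p
  have h2 := hT q
  rw [hTpq] at h1
  rw [h1, hc] at h2
  have := sub_left_injective.eq_iff.mp h2
  exact this
end
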